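/- arXiv:2112.10287 — 2 statements merged into one kernel-verified Lean document; each statement's English description precedes it below -/
import Mathlib

section
/- Let Σ be a simplicial complex on Fin n and let q be a family of real numbers indexed by the relevant indices (those x with supp(x) ∈ Σ). Then q arises as the family of relevant Möbius coordinates (q(x) = φ(P)(x) for all relevant x) of some tensor P in the marginal independence model M_Σ with ∑_x P(x) = 1, if and only if there exist parameters θ^(i)_k ∈ ℝ (for i ∈ Fin n and 0 ≤ k < d i − 1) such that q(x) = ∏_{i ∈ supp(x)} θ^(i)_{x i} for every relevant index x. -/
/-- A tensor of format `m : ι → ℕ` has rank at most one if its entries factor as a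
product of vectors. -/
def RankOneOn {ι : Type} [Fintype ι] {m : ι → ℕ} (T : (∀ i, Fin (m i)) → ℝ) : Prop :=
  ∃ v : ∀ i, Fin (m i) → ℝ, ∀ y, T y = ∏ i, v i (y i)

/-- The marginalization of a tensor `P` to a finset `σ` of coordinates: the entry at
`y : ∀ i : σ, Fin (d i)` is the sum of `P x` over all `x` agreeing with `y` on `σ`. -/
def marg {n : ℕ} {d : Fin n → ℕ} (P : (∀ i, Fin (d i)) → ℝ) (σ : Finset (Fin n)) :
    (∀ i : σ, Fin (d i)) → ℝ :=
  fun y => ∑ x : ∀ i, Fin (d i), if ∀ i : σ, x i = y i then P x else 0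

/-- The Möbius transform of a tensor: the entry at `x` is the sum of the entries `P z`
over all `z` agreeing with `x` at every coordinate where `x` is not the last state
(the last state `d i - 1` plays the role of the marginalization symbol `+`). -/
def mobius {n : ℕ} (d : Fin n → ℕ) (P : (∀ i, Fin (d i)) → ℝ) : (∀ i, Fin (d i)) → ℝ :=
  fun x => ∑ z : ∀ i, Fin (d i),
    if ∀ i, (x i : ℕ) ≠ d i - 1 → z i = x i then P z else 0

/-- The support of an index `x`: the set of coordinates where `x` is not the last state. -/
def suppIdx {n : ℕ} {d : Fin n → ℕ} (x : ∀ i, Fin (d i)) : Finset (Fin n) :=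
  Finset.univ.filter fun i => (x i : ℕ) ≠ d i - 1

section aux
variable {n : ℕ} {d : Fin n → ℕ}

lemma mem_suppIdx {x : ∀ i, Fin (d i)} {i : Fin n} :
    i ∈ suppIdx x ↔ (x i : ℕ) ≠ d i - 1 := by
  simp [suppIdx]

lemma sum_pi_prod {ι : Type} [Fintype ι] [DecidableEq ι] {κ : ι → Type} [∀ i, Fintype (κ i)]
    (v : ∀ i, κ i → ℝ) :
    ∑ y : ∀ i, κ i, ∏ i, v i (y i) = ∏ i, ∑ t, v i t := by
  rw [Finset.prod_univ_sum, Fintype.piFinset_univ]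

lemma sum_pi_ite {ι : Type} [Fintype ι] [DecidableEq ι] {κ : ι → Type} [∀ i, Fintype (κ i)]
    [∀ i, DecidableEq (κ i)] (v : ∀ i, κ i → ℝ) (j0 : ι) (k : κ j0) :
    ∑ y : ∀ i, κ i, (if y j0 = k then ∏ i, v i (y i) else 0)
      = v j0 k * ∏ i ∈ Finset.univ.erase j0, ∑ t, v i t := by
  have hain : ∀ y : ∀ i, κ i, (if y j0 = k then ∏ i, v i (y i) else 0)
      = ∏ i, Function.update v j0 (fun t => if t = k then v j0 t else 0) i (y i) := by
    intro y
    by_cases h : y j0 = k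
    · rw [if_pos h]
      refine Finset.prod_congr rfl fun i _ => ?_
      rcases eq_or_ne i j0 with rfl | hne
      · rw [Function.update_self, if_pos h]
      · rw [Function.update_of_ne hne]
    · rw [if_neg h]
      symm
      refine Finset.prod_eq_zero (Finset.mem_univ j0) ?_
      rw [Function.update_self, if_neg h]
  rw [Finset.sum_congr rfl fun y _ => hain y, sum_pi_prod,
      ← Finset.mul_prod_erase Finset.univ _ (Finset.mem_univ j0)]
  congr 1
  · rw [Function.update_self, Finset.sum_ite_eq' Finset.univ k (v j0),
      if_pos (Finset.mem_univ k)]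
  · refine Finset.prod_congr rfl fun i hi => ?_
    rw [Function.update_of_ne (Finset.ne_of_mem_erase hi)]

lemma sum_marg (P : (∀ i, Fin (d i)) → ℝ) (σ : Finset (Fin n)) :
    ∑ y : ∀ i : σ, Fin (d i), marg P σ y = ∑ x, P x := by
  unfold marg
  rw [Finset.sum_comm]
  refine Finset.sum_congr rfl fun x _ => ?_
  rw [Finset.sum_eq_single (fun i : σ => x i)]
  · rw [if_pos fun i => rfl]
  · intro y _ hy
    rw [if_neg]
    intro h
    exact hy (funext fun i => (h i).symm)
  · intro h; exact absurd (Finset.mem_univ _) h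

lemma marg_single (P : (∀ i, Fin (d i)) → ℝ) (σ : Finset (Fin n)) (j0 : σ) (k : Fin (d j0)) :
    ∑ y : ∀ i : σ, Fin (d i), (if y j0 = k then marg P σ y else 0)
      = ∑ x : ∀ i, Fin (d i), (if x j0 = k then P x else 0) := by
  have key : ∀ y : ∀ i : σ, Fin (d i), (if y j0 = k then marg P σ y else 0)
      = ∑ x : ∀ i, Fin (d i), (if y j0 = k ∧ ∀ i : σ, x i = y i then P x else 0) := by
    intro y
    by_cases h : y j0 = k
    · rw [if_pos h]
      unfold marg
      refine Finset.sum_congr rfl fun x _ => if_congr ?_ rfl rfl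
      simp [h]
    · rw [if_neg h]
      symm
      refine Finset.sum_eq_zero fun x _ => if_neg ?_
      exact fun hc => h hc.1
  rw [Finset.sum_congr rfl fun y _ => key y, Finset.sum_comm]
  refine Finset.sum_congr rfl fun x _ => ?_
  rw [Finset.sum_eq_single (fun i : σ => x i)]
  · exact if_congr (by simp) rfl rfl
  · intro y _ hy
    refine if_neg fun hc => hy (funext fun i => (hc.2 i).symm)
  · intro h; exact absurd (Finset.mem_univ _) h

def eIdx (hd : ∀ i, 1 ≤ d i) (i : Fin n) (k : Fin (d i)) : ∀ j, Fin (d j) :=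
  fun j => if h : j = i then Fin.cast (congrArg d h).symm k
    else ⟨d j - 1, by have := hd j; omega⟩

lemma eIdx_self (hd : ∀ i, 1 ≤ d i) (i : Fin n) (k : Fin (d i)) : eIdx hd i k i = k := by
  apply Fin.ext
  simp [eIdx]

lemma eIdx_ne (hd : ∀ i, 1 ≤ d i) {i j : Fin n} (hne : j ≠ i) (k : Fin (d i)) :
    (eIdx hd i k j : ℕ) = d j - 1 := by
  simp [eIdx, hne]

lemma mobius_single (hd : ∀ i, 1 ≤ d i) (P : (∀ i, Fin (d i)) → ℝ) (i : Fin n)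
    (k : Fin (d i)) (hk : (k : ℕ) ≠ d i - 1) :
    mobius d P (eIdx hd i k) = ∑ x : ∀ j, Fin (d j), (if x i = k then P x else 0) := by
  unfold mobius
  refine Finset.sum_congr rfl fun z _ => if_congr ?_ rfl rfl
  constructor
  · intro h
    have := h i (by rw [eIdx_self]; exact hk)
    rwa [eIdx_self] at this
  · intro hz j hj
    rcases eq_or_ne j i with rfl | hne
    · rw [eIdx_self]; exact hz
    · exact absurd (eIdx_ne hd hne k) hj

lemma mobius_eq_marg (P : (∀ i, Fin (d i)) → ℝ) (x : ∀ i, Fin (d i)) :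
    mobius d P x = marg P (suppIdx x) (fun i => x i) := by
  unfold mobius marg
  refine Finset.sum_congr rfl fun z _ => if_congr ?_ rfl rfl
  constructor
  · intro h i
    exact h i (mem_suppIdx.mp i.2)
  · intro h i hi
    exact h ⟨i, mem_suppIdx.mpr hi⟩

lemma marg_prod (hd : ∀ i, 1 ≤ d i) (p : ∀ i, Fin (d i) → ℝ) (hp : ∀ i, ∑ k, p i k = 1)
    (σ : Finset (Fin n)) (y : ∀ i : σ, Fin (d i)) :
    marg (fun x => ∏ i, p i (x i)) σ y = ∏ i : σ, p i (y i) := by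
  classical
  set yh : ∀ i, Fin (d i) := fun i => if h : i ∈ σ then y ⟨i, h⟩
    else ⟨d i - 1, by have := hd i; omega⟩ with hyh
  set u : ∀ i, Fin (d i) → ℝ := fun i t =>
    if i ∈ σ then (if t = yh i then p i t else 0) else p i t with hu
  have step1 : marg (fun x => ∏ i, p i (x i)) σ y = ∑ x : ∀ i, Fin (d i), ∏ i, u i (x i) := by
    unfold marg
    refine Finset.sum_congr rfl fun x _ => ?_
    by_cases hc : ∀ i : σ, x i = y i
    · rw [if_pos hc]
      refine Finset.prod_congr rfl fun i _ => ?_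
      by_cases hi : i ∈ σ
      · simp only [hu, if_pos hi]
        rw [if_pos]
        show x i = yh i
        simp only [hyh]
        rw [dif_pos hi]
        exact hc ⟨i, hi⟩
      · simp only [hu, if_neg hi]
    · rw [if_neg hc]
      push_neg at hc
      obtain ⟨j, hj⟩ := hc
      symm
      refine Finset.prod_eq_zero (Finset.mem_univ (j : Fin n)) ?_
      simp only [hu, if_pos j.2]
      rw [if_neg]
      intro hxy
      apply hj
      rw [hxy]
      show yh (j : Fin n) = y j
      simp only [hyh]
      rw [dif_pos j.2]
  rw [step1, sum_pi_prod]
  have hsum : ∀ i, ∑ t, u i t = if i ∈ σ then p i (yh i) else 1 := by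
    intro i
    by_cases hi : i ∈ σ
    · simp only [hu, if_pos hi]
      rw [Finset.sum_ite_eq' Finset.univ (yh i) (p i), if_pos (Finset.mem_univ _)]
    · simp only [hu, if_neg hi]
      exact hp i
  rw [Finset.prod_congr rfl fun i _ => hsum i, Finset.prod_ite_mem, Finset.univ_inter,
    ← Finset.prod_coe_sort σ (fun i => p i (yh i))]
  refine Finset.prod_congr rfl fun i _ => ?_
  congr 1
  show yh (i : Fin n) = y i
  simp only [hyh]
  rw [dif_pos i.2]

end aux

/-- For a simplicial complex `S`, a family `q` of real numbers indexed by
the relevant indices (those `x` with `supp(x) ∈ S`) arises as the family of relevant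
Möbius coordinates of some tensor `P` in the marginal independence model `M_S` with
entries summing to `1`, if and only if there are parameters `θ⁽ⁱ⁾_k` (for `i : Fin n`
and `0 ≤ k < d i - 1`) with `q(x) = ∏_{i ∈ supp(x)} θ⁽ⁱ⁾_{x i}` for all relevant `x`. -/
theorem relevant_mobius_iff_monomial_param (n : ℕ) (hn : 1 ≤ n) (d : Fin n → ℕ)
    (hd : ∀ i, 1 ≤ d i) (S : Set (Finset (Fin n)))
    (hdown : ∀ σ ∈ S, ∀ τ ⊆ σ, τ ∈ S) (hsingle : ∀ i : Fin n, {i} ∈ S)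
    (q : {x : ∀ i, Fin (d i) // suppIdx x ∈ S} → ℝ) :
    (∃ P : (∀ i, Fin (d i)) → ℝ,
        (∀ σ ∈ S, RankOneOn (marg P σ)) ∧ (∑ x, P x = 1) ∧
        ∀ x : {x : ∀ i, Fin (d i) // suppIdx x ∈ S}, q x = mobius d P x.1) ↔
      (∃ θ : ∀ i, Fin (d i) → ℝ,
        ∀ x : {x : ∀ i, Fin (d i) // suppIdx x ∈ S},
          q x = ∏ i ∈ suppIdx x.1, θ i (x.1 i)) := by
  classical
  constructor
  · rintro ⟨P, hrank, hsum1, hq⟩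
    refine ⟨fun i k => mobius d P (eIdx hd i k), fun x => ?_⟩
    obtain ⟨v, hv⟩ := hrank (suppIdx x.1) x.2
    have hs : ∏ j : (suppIdx x.1 : Finset (Fin n)), (∑ t, v j t) = 1 := by
      calc ∏ j : (suppIdx x.1 : Finset (Fin n)), (∑ t, v j t)
          = ∑ y : ∀ j : (suppIdx x.1 : Finset (Fin n)), Fin (d j), ∏ j, v j (y j) :=
            (sum_pi_prod v).symm
        _ = ∑ y, marg P (suppIdx x.1) y := Finset.sum_congr rfl fun y _ => (hv y).symm
        _ = ∑ z, P z := sum_marg P _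
        _ = 1 := hsum1
    have key : ∀ j : (suppIdx x.1 : Finset (Fin n)),
        mobius d P (eIdx hd j.1 (x.1 j.1))
          = v j (x.1 j.1) * ∏ i ∈ Finset.univ.erase j, ∑ t, v i t := by
      intro j
      have hk : (x.1 j.1 : ℕ) ≠ d j.1 - 1 := mem_suppIdx.mp j.2
      rw [mobius_single hd P j.1 (x.1 j.1) hk, ← marg_single P (suppIdx x.1) j (x.1 j.1)]
      simp only [hv]
      exact sum_pi_ite v j (x.1 j.1)
    have hsne : ∀ j : (suppIdx x.1 : Finset (Fin n)),
        ∏ i ∈ Finset.univ.erase j, (∑ t, v i t) = (∑ t, v j t)⁻¹ := by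
      intro j
      refine eq_inv_of_mul_eq_one_right ?_
      rw [Finset.mul_prod_erase Finset.univ (fun i => ∑ t, v i t) (Finset.mem_univ j), hs]
    calc q x = mobius d P x.1 := hq x
      _ = marg P (suppIdx x.1) (fun i => x.1 i) := mobius_eq_marg P x.1
      _ = ∏ j : (suppIdx x.1 : Finset (Fin n)), v j (x.1 j.1) := hv _
      _ = ∏ j : (suppIdx x.1 : Finset (Fin n)), v j (x.1 j.1) * (∑ t, v j t)⁻¹ := by
          rw [Finset.prod_mul_distrib, Finset.prod_inv_distrib, hs, inv_one, mul_one]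
      _ = ∏ j : (suppIdx x.1 : Finset (Fin n)), mobius d P (eIdx hd j.1 (x.1 j.1)) :=
          Finset.prod_congr rfl fun j _ => by rw [key j, hsne j]
      _ = ∏ i ∈ suppIdx x.1, mobius d P (eIdx hd i (x.1 i)) :=
          Finset.prod_coe_sort (suppIdx x.1) (fun i => mobius d P (eIdx hd i (x.1 i)))
  · rintro ⟨θ, hθ⟩
    set p : ∀ i, Fin (d i) → ℝ := fun i k =>
      if (k : ℕ) = d i - 1 then
        1 - ∑ t ∈ Finset.univ.filter (fun t : Fin (d i) => ¬ (t : ℕ) = d i - 1), θ i t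
      else θ i k with hpdef
    have hps : ∀ i, ∑ k, p i k = 1 := by
      intro i
      have hfil : Finset.univ.filter (fun k : Fin (d i) => (k : ℕ) = d i - 1)
          = {⟨d i - 1, by have := hd i; omega⟩} := by
        ext k
        simp [Fin.ext_iff]
      simp only [hpdef]
      rw [Finset.sum_ite, hfil, Finset.sum_singleton]
      ring
    have hplt : ∀ i (k : Fin (d i)), (k : ℕ) ≠ d i - 1 → p i k = θ i k := by
      intro i k hk
      simp only [hpdef]
      rw [if_neg hk]
    refine ⟨fun x => ∏ i, p i (x i),
      fun σ _ => ⟨fun j => p j, fun y => marg_prod hd p hps σ y⟩, ?_, ?_⟩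
    · rw [sum_pi_prod]
      exact Finset.prod_eq_one fun i _ => hps i
    · intro x
      rw [hθ x, mobius_eq_marg, marg_prod hd p hps,
        ← Finset.prod_coe_sort (suppIdx x.1) (fun i => θ i (x.1 i))]
      exact Finset.prod_congr rfl fun i _ => (hplt _ _ (mem_suppIdx.mp i.2)).symm
end

section
/- Fix n ≥ 1 and let all d i = 2 (binary tensors). For simplicial complexes Σ and Σ' on Fin n, one has Σ ⊆ Σ' if and only if M_{Σ'} ⊆ M_Σ. -/
/-- The marginal independence model: all binary tensors whose marginalizations to the
faces of `S` have rank at most one. -/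
def modelBin (n : ℕ) (S : Set (Finset (Fin n))) :
    Set ((∀ _ : Fin n, Fin 2) → ℝ) :=
  {P | ∀ σ ∈ S, RankOneOn (marg (d := fun _ => 2) P σ)}

section Aux

open Finset

/-- sign function on `Fin 2`. -/
noncomputable def sg : Fin 2 → ℝ := fun t => if t = 0 then 1 else -1

lemma sg_zero : sg 0 = 1 := by simp [sg]
lemma sg_one : sg 1 = -1 := by simp [sg]

lemma marg_eq_sum_piFinset {n : ℕ} (P : (∀ _ : Fin n, Fin 2) → ℝ) (τ : Finset (Fin n))
    (y : ∀ i : τ, Fin 2) :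
    marg (d := fun _ => 2) P τ y
      = ∑ x ∈ Fintype.piFinset (fun i => if h : i ∈ τ then {y ⟨i, h⟩} else Finset.univ), P x := by
  classical
  unfold marg
  rw [← Finset.sum_filter]
  apply Finset.sum_congr _ (fun _ _ => rfl)
  ext x
  simp only [Fintype.mem_piFinset, Finset.mem_filter, Finset.mem_univ, true_and]
  constructor
  · intro h i
    by_cases hi : i ∈ τ
    · have := h ⟨i, hi⟩
      simp [hi, this]
    · simp [hi]
  · intro h i
    have := h ↑i
    simpa [i.2] using this

lemma marg_prod_s13 {n : ℕ} (g : Fin n → Fin 2 → ℝ) (τ : Finset (Fin n)) (y : ∀ i : τ, Fin 2) :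
    marg (d := fun _ => 2) (fun x => ∏ i, g i (x i)) τ y
      = ∏ i, (if h : i ∈ τ then g i (y ⟨i, h⟩) else g i 0 + g i 1) := by
  classical
  rw [marg_eq_sum_piFinset, ← Finset.prod_univ_sum]
  apply Finset.prod_congr rfl
  intro i _
  by_cases hi : i ∈ τ <;> simp [hi, Fin.sum_univ_two]

lemma marg_add {n : ℕ} (P Q : (∀ _ : Fin n, Fin 2) → ℝ) (τ : Finset (Fin n))
    (y : ∀ i : τ, Fin 2) :
    marg (d := fun _ => 2) (fun x => P x + Q x) τ y
      = marg (d := fun _ => 2) P τ y + marg (d := fun _ => 2) Q τ y := by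
  classical
  unfold marg
  rw [← Finset.sum_add_distrib]
  apply Finset.sum_congr rfl
  intro x _
  split <;> simp

end Aux

/-- For binary tensors and simplicial complexes `S`, `S'` on `Fin n`,
one has `S ⊆ S'` if and only if `M_{S'} ⊆ M_S`. -/
theorem complex_subset_iff_model_supset (n : ℕ) (hn : 1 ≤ n)
    (S S' : Set (Finset (Fin n)))
    (hdown : ∀ σ ∈ S, ∀ τ ⊆ σ, τ ∈ S) (hsingle : ∀ i : Fin n, {i} ∈ S)
    (hdown' : ∀ σ ∈ S', ∀ τ ⊆ σ, τ ∈ S') (hsingle' : ∀ i : Fin n, {i} ∈ S') :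
    S ⊆ S' ↔ modelBin n S' ⊆ modelBin n S := by
  classical
  constructor
  · intro h P hP σ hσ
    exact hP σ (h hσ)
  · intro hM σ hσS
    by_contra hσS'
    -- σ has two distinct elements
    have hne : σ ≠ ∅ := by
      rintro rfl
      exact hσS' (hdown' _ (hsingle' ⟨0, hn⟩) _ (Finset.empty_subset _))
    obtain ⟨a, ha⟩ := Finset.nonempty_iff_ne_empty.2 hne
    have hab : ∃ b ∈ σ, b ≠ a := by
      by_contra hc
      push_neg at hc
      have hsub : σ ⊆ {a} := fun x hx => Finset.mem_singleton.2 (hc x hx)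
      exact hσS' (hdown' _ (hsingle' a) _ hsub)
    obtain ⟨b, hb, hba⟩ := hab
    -- the counterexample tensor
    set g0 : Fin n → Fin 2 → ℝ := fun _ _ => (2:ℝ)⁻¹ with hg0
    set g1 : Fin n → Fin 2 → ℝ := fun i t => (2:ℝ)⁻¹ * (if i ∈ σ then sg t else 1) with hg1
    set P : (∀ _ : Fin n, Fin 2) → ℝ :=
      fun x => (∏ i, g0 i (x i)) + (∏ i, g1 i (x i)) with hP
    have hmargP : ∀ (τ : Finset (Fin n)) (y : ∀ i : τ, Fin 2),
        marg (d := fun _ => 2) P τ y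
          = (∏ i, (if h : i ∈ τ then g0 i (y ⟨i, h⟩) else g0 i 0 + g0 i 1))
            + (∏ i, (if h : i ∈ τ then g1 i (y ⟨i, h⟩) else g1 i 0 + g1 i 1)) := by
      intro τ y
      rw [hP]
      rw [marg_add, marg_prod_s13, marg_prod_s13]
    -- P belongs to the model of S'
    have hPmem : P ∈ modelBin n S' := by
      intro τ hτ
      have hsub : ¬ σ ⊆ τ := fun hsub => hσS' (hdown' τ hτ σ hsub)
      obtain ⟨i0, hi0σ, hi0τ⟩ := Finset.not_subset.1 hsub
      refine ⟨fun _ _ => (2:ℝ)⁻¹, fun y => ?_⟩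
      rw [hmargP]
      have h1 : (∏ i, (if h : i ∈ τ then g1 i (y ⟨i, h⟩) else g1 i 0 + g1 i 1)) = 0 := by
        apply Finset.prod_eq_zero (Finset.mem_univ i0)
        rw [dif_neg hi0τ]
        simp [hg1, hi0σ, sg_zero, sg_one]
      rw [h1, add_zero]
      have h0 : (∏ i, (if h : i ∈ τ then g0 i (y ⟨i, h⟩) else g0 i 0 + g0 i 1))
          = ∏ i, (if i ∈ τ then (2:ℝ)⁻¹ else 1) := by
        apply Finset.prod_congr rfl
        intro i _
        by_cases hi : i ∈ τ <;> simp [hi, hg0] <;> norm_num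
      rw [h0, Finset.prod_ite_mem, Finset.univ_inter, ← Finset.prod_coe_sort]
    -- hence P belongs to the model of S, so marg P σ has rank one
    obtain ⟨v, hv⟩ := hM hPmem σ hσS
    -- the four evaluation points
    set Y : Fin 2 → Fin 2 → (∀ _ : σ, Fin 2) :=
      fun s t i => if (i : Fin n) = a then s else if (i : Fin n) = b then t else 0 with hY
    set C : ℝ := ∏ i, (if i ∈ σ then (2:ℝ)⁻¹ else 1) with hC
    have hCne : C ≠ 0 := by
      rw [hC]
      rw [Finset.prod_ne_zero_iff]
      intro i _
      split <;> norm_num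
    have hT : ∀ s t : Fin 2, marg (d := fun _ => 2) P σ (Y s t) = C * (1 + sg s * sg t) := by
      intro s t
      rw [hmargP]
      have h0 : (∏ i, (if h : i ∈ σ then g0 i (Y s t ⟨i, h⟩) else g0 i 0 + g0 i 1)) = C := by
        rw [hC]
        apply Finset.prod_congr rfl
        intro i _
        by_cases hi : i ∈ σ <;> simp [hi, hg0] <;> norm_num
      have h1 : (∏ i, (if h : i ∈ σ then g1 i (Y s t ⟨i, h⟩) else g1 i 0 + g1 i 1))
          = C * (sg s * sg t) := by
        have hfac : ∀ i : Fin n,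
            (if h : i ∈ σ then g1 i (Y s t ⟨i, h⟩) else g1 i 0 + g1 i 1)
              = (if i ∈ σ then (2:ℝ)⁻¹ else 1)
                * ((if i = a then sg s else 1) * (if i = b then sg t else 1)) := by
          intro i
          by_cases hi : i ∈ σ
          · rw [dif_pos hi]
            have hY' : Y s t ⟨i, hi⟩ = if i = a then s else if i = b then t else 0 := rfl
            rw [hg1]
            simp only [hi, if_pos, hY']
            by_cases hia : i = a
            · subst hia
              have hib : i ≠ b := fun h => hba h.symm
              simp [hib]
            · by_cases hib : i = b <;> simp [hia, hib, hba, sg_zero]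
          · rw [dif_neg hi]
            have hia : i ≠ a := fun h => hi (h ▸ ha)
            have hib : i ≠ b := fun h => hi (h ▸ hb)
            simp [hg1, hi, hia, hib, sg_zero, sg_one]
            norm_num
        calc (∏ i, (if h : i ∈ σ then g1 i (Y s t ⟨i, h⟩) else g1 i 0 + g1 i 1))
            = ∏ i, ((if i ∈ σ then (2:ℝ)⁻¹ else 1)
                * ((if i = a then sg s else 1) * (if i = b then sg t else 1))) :=
              Finset.prod_congr rfl (fun i _ => hfac i)
          _ = C * (sg s * sg t) := by
              rw [Finset.prod_mul_distrib, Finset.prod_mul_distrib,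
                Finset.prod_ite_eq' Finset.univ a (fun _ => sg s),
                Finset.prod_ite_eq' Finset.univ b (fun _ => sg t)]
              simp [hC]
      rw [h0, h1]
      ring
    -- the rank-one quadratic identity
    have hquad : marg (d := fun _ => 2) P σ (Y 0 0) * marg (d := fun _ => 2) P σ (Y 1 1)
        = marg (d := fun _ => 2) P σ (Y 0 1) * marg (d := fun _ => 2) P σ (Y 1 0) := by
      rw [hv, hv, hv, hv, ← Finset.prod_mul_distrib, ← Finset.prod_mul_distrib]
      apply Finset.prod_congr rfl
      intro i _
      by_cases hia : (i : Fin n) = a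
      · have hib : (i : Fin n) ≠ b := fun h => hba (h.symm.trans hia)
        simp [hY, hia, hib]
      · by_cases hib : (i : Fin n) = b
        · simp [hY, hia, hib, hba, mul_comm]
        · simp [hY, hia, hib]
    rw [hT, hT, hT, hT] at hquad
    simp only [sg_zero, sg_one] at hquad
    have : (4:ℝ) * C ^ 2 = 0 := by nlinarith [hquad]
    have : C = 0 := by nlinarith [this]
    exact hCne this
end
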